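/- Consider a Blackwell game, a strategy profile σ, a player i, and a real number c. If E_σ[f_i | h] ≥ c for every history h ∈ H, then P_σ({p ∈ A^ℕ : f_i(p) ≥ c}) = 1. -/

import Mathlib

open MeasureTheory

namespace Blackwell

/-- The set of plays: infinite streams of action profiles. -/
abbrev Play {ι : Type*} (Ac : ι → Type*) : Type _ := ℕ → ∀ j, Ac j

/-- A behavior strategy of player `i`: a mixed action after every finite history.
A history of length `t` is encoded by the first `t` coordinates of a play, and the
strategy is required to depend only on these coordinates. -/
structure Strategy {ι : Type*} (Ac : ι → Type*) (i : ι) where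
  act : ℕ → Play Ac → PMF (Ac i)
  depends_on_past : ∀ (t : ℕ) (p q : Play Ac), (∀ s, s < t → p s = q s) → act t p = act t q

/-- A strategy profile: a behavior strategy for every player. -/
abbrev Profile {ι : Type*} (Ac : ι → Type*) : Type _ := ∀ i, Strategy Ac i

/-- The assignment, to each strategy profile `σ`, of the induced (Ionescu–Tulcea)
probability measure `P_σ` on the set of plays; it is uniquely characterized by the
probabilities it assigns to cylinder sets. -/
structure PlayMeasure {ι : Type*} [Fintype ι] (Ac : ι → Type*)
    [∀ i, MeasurableSpace (Ac i)] where
  μ : Profile Ac → Measure (Play Ac)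
  isProb : ∀ σ, IsProbabilityMeasure (μ σ)
  cyl : ∀ (σ : Profile Ac) (n : ℕ) (p : Play Ac),
    μ σ {q | ∀ t, t < n → q t = p t}
      = ∏ t ∈ Finset.range n, ∏ i, ((σ i).act t p) (p t i)

variable {ι : Type*} [Fintype ι] [DecidableEq ι] [Nonempty ι]
  {Ac : ι → Type*} [∀ i, Fintype (Ac i)] [∀ i, Nonempty (Ac i)]
  [∀ i, MeasurableSpace (Ac i)] [∀ i, DiscreteMeasurableSpace (Ac i)]

/-- The expected payoff `E_σ[f]` of a strategy profile `σ` for payoff function `f`. -/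
noncomputable def expPay (PM : PlayMeasure Ac) (σ : Profile Ac) (f : Play Ac → ℝ) : ℝ :=
  ∫ p, f p ∂(PM.μ σ)

/-- Concatenation of the history given by the first `n` coordinates of `h` with the play `q`. -/
def splice (n : ℕ) (h q : Play Ac) : Play Ac := fun t => if t < n then h t else q (t - n)

/-- The continuation of a strategy in the subgame that starts at the history
given by the first `n` coordinates of `h`. -/
def Strategy.shift {i : ι} (σi : Strategy Ac i) (n : ℕ) (h : Play Ac) : Strategy Ac i where
  act t q := σi.act (n + t) (splice n h q)
  depends_on_past := by
    intro t p q hpq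
    refine σi.depends_on_past _ _ _ ?_
    intro s hs
    simp only [splice]
    by_cases hsn : s < n
    · simp [hsn]
    · simp only [if_neg hsn]
      exact hpq (s - n) (by omega)

/-- The expected payoff `E_σ[f ∣ h]` in the subgame that starts at the history
given by the first `n` coordinates of `h`. -/
noncomputable def subExp (PM : PlayMeasure Ac) (σ : Profile Ac) (f : Play Ac → ℝ)
    (n : ℕ) (h : Play Ac) : ℝ :=
  ∫ q, f (splice n h q) ∂(PM.μ (fun i => (σ i).shift n h))

/-- The minmax value of player `i`. -/
noncomputable def minmax (PM : PlayMeasure Ac) (f : Play Ac → ℝ) (i : ι) : ℝ :=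
  ⨅ τ : Profile Ac, ⨆ σi : Strategy Ac i, expPay PM (Function.update τ i σi) f

/-- The maxmin value of player `i`. -/
noncomputable def maxmin (PM : PlayMeasure Ac) (f : Play Ac → ℝ) (i : ι) : ℝ :=
  ⨆ σi : Strategy Ac i, ⨅ τ : Profile Ac, expPay PM (Function.update τ i σi) f

/-- The minmax value of player `i` in the subgame that starts at the history
given by the first `n` coordinates of `h`. -/
noncomputable def subMinmax (PM : PlayMeasure Ac) (f : Play Ac → ℝ) (i : ι)
    (n : ℕ) (h : Play Ac) : ℝ :=
  ⨅ τ : Profile Ac, ⨆ σi : Strategy Ac i, subExp PM (Function.update τ i σi) f n h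

/-- The maxmin value of player `i` in the subgame that starts at the history
given by the first `n` coordinates of `h`. -/
noncomputable def subMaxmin (PM : PlayMeasure Ac) (f : Play Ac → ℝ) (i : ι)
    (n : ℕ) (h : Play Ac) : ℝ :=
  ⨆ σi : Strategy Ac i, ⨅ τ : Profile Ac, subExp PM (Function.update τ i σi) f n h

/-- A strategy profile `σ` is an `ε`-equilibrium if no player can gain more than `ε`
by a unilateral deviation. -/
def IsEpsEquilibrium (PM : PlayMeasure Ac) (f : ι → Play Ac → ℝ) (ε : ℝ)
    (σ : Profile Ac) : Prop :=
  ∀ (i : ι) (σi : Strategy Ac i),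
    expPay PM (Function.update σ i σi) (f i) ≤ expPay PM σ (f i) + ε

/-- A payoff function is tail-measurable if changing finitely many coordinates of the
play does not change its value. -/
def TailMeasurable (f : Play Ac → ℝ) : Prop :=
  ∀ p q : Play Ac, (∃ N, ∀ t, N ≤ t → p t = q t) → f p = f q

/-- A payoff function is bounded. -/
def BddPayoff (f : Play Ac → ℝ) : Prop := ∃ C, ∀ p, |f p| ≤ C

/-!
The subgame payoff is a version of the conditional expectation of `f i` given the first `n`
moves. Indeed, by the product formula defining `P_σ`, the probability of a long cylinder
through a history `h` factors as `P_σ(h)` times the probability of the remaining moves under the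
continuation profile, so `P_σ` restricted to the cylinder of `h` is `P_σ(h)` times the image of
the continuation measure under concatenation with `h`. Integrating gives
`∫_{cylinder h} (f i - c) dP_σ = P_σ(h) (E_σ[f i | h] - c) ≥ 0`. Every measurable cylinder is a
countable disjoint union of such cylinders, and measurable cylinders form an algebra generating
the σ-algebra of plays, hence approximate every measurable set in measure; so
`∫_S (f i - c) dP_σ ≥ 0` for every measurable `S`, which forces `f i ≥ c` almost surely.
-/

open Filter Topology Function
open scoped symmDiff

theorem _root_.MeasureTheory.Measure.MeasureDense.ae_nonneg_of_forall_setIntegral_nonneg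
    {α : Type*} [MeasurableSpace α] {μ : Measure α} {𝒜 : Set (Set α)}
    (h𝒜 : μ.MeasureDense 𝒜) {f : α → ℝ} (hf : Integrable f μ)
    (hf𝒜 : ∀ s ∈ 𝒜, 0 ≤ ∫ x in s, f x ∂μ) : 0 ≤ᵐ[μ] f := by
  refine MeasureTheory.ae_nonneg_of_forall_setIntegral_nonneg hf fun s hs hμs => ?_
  choose t ht𝒜 hst using fun k : ℕ =>
    h𝒜.approx s hs hμs.ne (1 / (k + 1)) Nat.one_div_pos_of_nat
  have h_small : ∀ u : ℕ → Set α, (∀ k, u k ⊆ s ∆ t k) →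
      Tendsto (fun k => ∫ x in u k, f x ∂μ) atTop (𝓝 0) := by
    refine fun u hu => hf.tendsto_setIntegral_nhds_zero ?_
    refine tendsto_of_tendsto_of_tendsto_of_le_of_le tendsto_const_nhds ?_
      (fun _ => zero_le) fun k => (measure_mono (hu k)).trans (hst k).le
    simpa using ENNReal.tendsto_ofReal tendsto_one_div_add_atTop_nhds_zero_nat
  have h_split : ∀ k, ∫ x in t k, f x ∂μ
      = ∫ x in s, f x ∂μ - ∫ x in s \ t k, f x ∂μ + ∫ x in t k \ s, f x ∂μ := by
    intro k
    have hs_split :=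
      integral_inter_add_sdiff (h𝒜.measurable _ (ht𝒜 k)) (hf.integrableOn (s := s))
    have ht_split := integral_inter_add_sdiff hs (hf.integrableOn (s := t k))
    rw [Set.inter_comm] at ht_split
    linarith
  have h_lim : Tendsto (fun k => ∫ x in t k, f x ∂μ) atTop (𝓝 (∫ x in s, f x ∂μ)) := by
    simp_rw [h_split]
    simpa using (tendsto_const_nhds.sub (h_small _ fun _ => Set.subset_union_left)).add
      (h_small _ fun _ => Set.subset_union_right)
  exact ge_of_tendsto' h_lim fun k => hf𝒜 _ (ht𝒜 k)

theorem _root_.MeasureTheory.cylinder_eq_iUnion_singleton {ι : Type*} {α : ι → Type*}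
    (s : Finset ι) (T : Set (∀ i : s, α i)) : cylinder s T = ⋃ y : T, cylinder s {y.1} := by
  rw [← Set.biUnion_eq_iUnion T fun y _ => cylinder s {y}]
  exact (Set.biUnion_preimage_singleton _ T).symm

theorem _root_.MeasureTheory.pairwise_disjoint_cylinder_singleton {ι : Type*} {α : ι → Type*}
    (s : Finset ι) (T : Set (∀ i : s, α i)) :
    Pairwise (Disjoint on fun y : T => cylinder s {y.1}) :=
  fun _ _ hyz => (Set.disjoint_singleton.mpr (Subtype.coe_ne_coe.mpr hyz)).preimage _

section PrefixCylinder

variable {X : ℕ → Type*}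

def prefixCylinder (n : ℕ) (p : ∀ t, X t) : Set (∀ t, X t) := {q | ∀ t < n, q t = p t}

theorem cylinder_Iic_singleton_restrict (a : ℕ) (p : ∀ t, X t) :
    cylinder (Finset.Iic a) {(Finset.Iic a).restrict p} = prefixCylinder (a + 1) p := by
  ext q
  simp [prefixCylinder, funext_iff]

theorem cylinder_Iic_singleton_eq_empty_or (a : ℕ) (y : ∀ i : Finset.Iic a, X i) :
    cylinder (Finset.Iic a) {y} = ∅ ∨
      ∃ p, cylinder (Finset.Iic a) {y} = prefixCylinder (a + 1) p := by
  refine (Set.eq_empty_or_nonempty _).imp_right fun ⟨p, hp⟩ => ⟨p, ?_⟩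
  rw [← cylinder_Iic_singleton_restrict, (mem_cylinder _ _ _).mp hp]

theorem prefixCylinder_subset_of_mem {m n : ℕ} (hnm : n ≤ m) {p h : ∀ t, X t}
    (hp : p ∈ prefixCylinder n h) : prefixCylinder m p ⊆ prefixCylinder n h :=
  fun _ hq t ht => (hq t (ht.trans_le hnm)).trans (hp t ht)

theorem disjoint_prefixCylinder_of_not_mem {m n : ℕ} (hnm : n ≤ m) {p h : ∀ t, X t}
    (hp : p ∉ prefixCylinder n h) : Disjoint (prefixCylinder m p) (prefixCylinder n h) :=
  Set.disjoint_left.mpr fun _ hqp hqh =>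
    hp fun t ht => (hqp t (ht.trans_le hnm)).symm.trans (hqh t ht)

theorem exists_cylinder_Iic_of_mem_measurableCylinders [∀ n, MeasurableSpace (X n)]
    {S : Set (∀ n, X n)} (hS : S ∈ measurableCylinders X) (N : ℕ) :
    ∃ a, N ≤ a ∧ ∃ T, S = cylinder (Finset.Iic a) T := by
  obtain ⟨s, T, -, rfl⟩ := (mem_measurableCylinders S).mp hS
  have hs : s ⊆ Finset.Iic (max N (s.sup id)) := fun i hi =>
    Finset.mem_Iic.mpr ((Finset.le_sup (f := id) hi).trans (le_max_right _ _))
  refine ⟨max N (s.sup id), le_max_left _ _, Finset.restrict₂ hs ⁻¹' T, ?_⟩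
  rw [cylinder, cylinder, ← Set.preimage_comp, Finset.restrict₂_comp_restrict]

variable [∀ n, MeasurableSpace (X n)] [∀ n, MeasurableSingletonClass (X n)]

theorem measurableSet_prefixCylinder (n : ℕ) (p : ∀ t, X t) :
    MeasurableSet (prefixCylinder n p) := by
  cases n with
  | zero => simp [prefixCylinder]
  | succ a => exact cylinder_Iic_singleton_restrict a p ▸ (measurableSet_singleton _).cylinder

variable [∀ n, Countable (X n)]

theorem ext_of_prefixCylinder {μ ν : Measure (∀ n, X n)} [IsFiniteMeasure μ] (N : ℕ)
    (h : ∀ n, N ≤ n → ∀ p, μ (prefixCylinder n p) = ν (prefixCylinder n p)) :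
    μ = ν := by
  have h_cyl : ∀ S ∈ measurableCylinders X, μ S = ν S := by
    intro S hS
    obtain ⟨a, hNa, T, rfl⟩ := exists_cylinder_Iic_of_mem_measurableCylinders hS N
    have h_meas : ∀ y : T, MeasurableSet (cylinder (Finset.Iic a) {y.1}) :=
      fun y => (measurableSet_singleton _).cylinder
    rw [cylinder_eq_iUnion_singleton,
      measure_iUnion (pairwise_disjoint_cylinder_singleton _ T) h_meas,
      measure_iUnion (pairwise_disjoint_cylinder_singleton _ T) h_meas]
    refine tsum_congr fun y => ?_
    obtain hy | ⟨p, hy⟩ := cylinder_Iic_singleton_eq_empty_or a y.1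
    · simp [hy]
    · rw [hy, h _ (by omega)]
  exact ext_of_generate_finite _ generateFrom_measurableCylinders.symm
    isPiSystem_measurableCylinders h_cyl (h_cyl _ (univ_mem_measurableCylinders X))

theorem setIntegral_nonneg_of_mem_measurableCylinders {μ : Measure (∀ n, X n)}
    {f : (∀ n, X n) → ℝ} (hf : Integrable f μ)
    (h : ∀ n p, 0 ≤ ∫ x in prefixCylinder n p, f x ∂μ) {S : Set (∀ n, X n)}
    (hS : S ∈ measurableCylinders X) : 0 ≤ ∫ x in S, f x ∂μ := by
  obtain ⟨a, -, T, rfl⟩ := exists_cylinder_Iic_of_mem_measurableCylinders hS 0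
  rw [cylinder_eq_iUnion_singleton,
    integral_iUnion (fun _ => (measurableSet_singleton _).cylinder)
      (pairwise_disjoint_cylinder_singleton _ T) hf.integrableOn]
  refine tsum_nonneg fun y => ?_
  obtain hy | ⟨p, hy⟩ := cylinder_Iic_singleton_eq_empty_or a y.1
  · simp [hy]
  · exact hy ▸ h _ p

theorem ae_nonneg_of_forall_setIntegral_prefixCylinder_nonneg {μ : Measure (∀ n, X n)}
    [IsFiniteMeasure μ] {f : (∀ n, X n) → ℝ} (hf : Integrable f μ)
    (h : ∀ n p, 0 ≤ ∫ x in prefixCylinder n p, f x ∂μ) : 0 ≤ᵐ[μ] f :=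
  (Measure.MeasureDense.of_generateFrom_isSetAlgebra_finite μ isSetAlgebra_measurableCylinders
    generateFrom_measurableCylinders.symm).ae_nonneg_of_forall_setIntegral_nonneg hf
    fun _ hS => setIntegral_nonneg_of_mem_measurableCylinders hf h hS

end PrefixCylinder

section Splice
omit [Fintype ι] [DecidableEq ι] [Nonempty ι] [∀ i, Fintype (Ac i)] [∀ i, Nonempty (Ac i)]
  [∀ i, MeasurableSpace (Ac i)] [∀ i, DiscreteMeasurableSpace (Ac i)]

theorem splice_apply_of_lt {n t : ℕ} (ht : t < n) (h q : Play Ac) : splice n h q t = h t :=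
  if_pos ht

theorem splice_apply_add (n : ℕ) (h q : Play Ac) (s : ℕ) : splice n h q (n + s) = q s := by
  simp [splice]

theorem splice_mem_prefixCylinder (n : ℕ) (h q : Play Ac) : splice n h q ∈ prefixCylinder n h :=
  fun _ ht => splice_apply_of_lt ht h q

theorem splice_drop_eq_self {n : ℕ} {h p : Play Ac} (hp : p ∈ prefixCylinder n h) :
    splice n h (fun s => p (n + s)) = p := by
  funext t
  by_cases ht : t < n
  · rw [splice_apply_of_lt ht, hp t ht]
  · obtain ⟨s, rfl⟩ := Nat.exists_eq_add_of_le (not_lt.mp ht)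
    rw [splice_apply_add]

theorem preimage_splice_prefixCylinder (n k : ℕ) (h q : Play Ac) :
    splice n h ⁻¹' prefixCylinder (n + k) (splice n h q) = prefixCylinder k q := by
  ext r
  simp only [Set.mem_preimage, prefixCylinder, Set.mem_ofPred_eq]
  refine ⟨fun hr s hs => ?_, fun hr t ht => ?_⟩
  · simpa only [splice_apply_add] using hr (n + s) (by omega)
  · by_cases htn : t < n
    · rw [splice_apply_of_lt htn, splice_apply_of_lt htn]
    · obtain ⟨s, rfl⟩ := Nat.exists_eq_add_of_le (not_lt.mp htn)
      rw [splice_apply_add, splice_apply_add, hr s (by omega)]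

theorem measurable_splice [∀ i, MeasurableSpace (Ac i)] (n : ℕ) (h : Play Ac) :
    Measurable (splice n h) :=
  measurable_pi_lambda _ fun t => by
    by_cases ht : t < n <;> simp only [splice, ht, if_true, if_false] <;> fun_prop

end Splice

section Subgame
omit [DecidableEq ι] [Nonempty ι] [∀ i, Nonempty (Ac i)]

omit [∀ i, Fintype (Ac i)] [∀ i, DiscreteMeasurableSpace (Ac i)] in
theorem measure_prefixCylinder_splice (PM : PlayMeasure Ac) (σ : Profile Ac) (n k : ℕ)
    (h q : Play Ac) :
    PM.μ σ (prefixCylinder (n + k) (splice n h q))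
      = PM.μ σ (prefixCylinder n h) * PM.μ (fun i => (σ i).shift n h) (prefixCylinder k q) := by
  simp only [prefixCylinder]
  rw [PM.cyl, PM.cyl, PM.cyl, Finset.prod_range_add]
  congr 1
  · refine Finset.prod_congr rfl fun t ht => Finset.prod_congr rfl fun i _ => ?_
    have htn : t < n := Finset.mem_range.mp ht
    rw [(σ i).depends_on_past t _ h fun s hs => splice_apply_of_lt (hs.trans htn) h q,
      splice_apply_of_lt htn]
  · simp only [splice_apply_add]
    rfl

theorem restrict_prefixCylinder_eq_smul_map (PM : PlayMeasure Ac) (σ : Profile Ac) (n : ℕ)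
    (h : Play Ac) :
    (PM.μ σ).restrict (prefixCylinder n h)
      = PM.μ σ (prefixCylinder n h) • (PM.μ fun i => (σ i).shift n h).map (splice n h) := by
  have := PM.isProb σ
  refine ext_of_prefixCylinder n fun m hnm p => ?_
  obtain ⟨k, rfl⟩ := Nat.exists_eq_add_of_le hnm
  rw [Measure.restrict_apply (measurableSet_prefixCylinder _ _), Measure.smul_apply,
    Measure.map_apply (measurable_splice n h) (measurableSet_prefixCylinder _ _), smul_eq_mul]
  by_cases hp : p ∈ prefixCylinder n h
  · rw [Set.inter_eq_left.mpr (prefixCylinder_subset_of_mem hnm hp), ← splice_drop_eq_self hp,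
      preimage_splice_prefixCylinder, measure_prefixCylinder_splice]
  · have h_disj := disjoint_prefixCylinder_of_not_mem hnm hp
    rw [h_disj.inter_eq, Set.preimage_eq_empty (h_disj.mono_right ?_)]
    · simp
    · rintro _ ⟨q, rfl⟩
      exact splice_mem_prefixCylinder n h q

theorem setIntegral_prefixCylinder (PM : PlayMeasure Ac) (σ : Profile Ac) {g : Play Ac → ℝ}
    (hg : Measurable g) (n : ℕ) (h : Play Ac) :
    ∫ p in prefixCylinder n h, g p ∂PM.μ σ
      = (PM.μ σ).real (prefixCylinder n h) * subExp PM σ g n h := by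
  rw [restrict_prefixCylinder_eq_smul_map, integral_smul_measure,
    integral_map (measurable_splice n h).aemeasurable hg.aestronglyMeasurable, smul_eq_mul]
  rfl

end Subgame

/-- Lévy's zero-one law application: if in every subgame the expected
payoff of player `i` under `σ` is at least `c`, then `P_σ(f_i ≥ c) = 1`. -/
theorem payoff_ge_of_subgame_payoff_ge (PM : PlayMeasure Ac) (f : ι → Play Ac → ℝ)
    (hbdd : ∀ j, BddPayoff (f j)) (hmeas : ∀ j, Measurable (f j))
    (σ : Profile Ac) (i : ι) (c : ℝ)
    (hc : ∀ (n : ℕ) (h : Play Ac), c ≤ subExp PM σ (f i) n h) :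
    PM.μ σ {p : Play Ac | c ≤ f i p} = 1 := by
  have := PM.isProb σ
  obtain ⟨C, hC⟩ := hbdd i
  have hint : Integrable (f i) (PM.μ σ) :=
    Integrable.of_bound (hmeas i).aestronglyMeasurable C (.of_forall hC)
  have h_nonneg : 0 ≤ᵐ[PM.μ σ] fun p => f i p - c := by
    refine ae_nonneg_of_forall_setIntegral_prefixCylinder_nonneg (hint.sub (integrable_const c))
      fun n h => ?_
    rw [integral_sub hint.integrableOn integrableOn_const,
      setIntegral_prefixCylinder PM σ (hmeas i), setIntegral_const, smul_eq_mul, ← mul_sub]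
    exact mul_nonneg measureReal_nonneg (sub_nonneg.mpr (hc n h))
  rw [← measure_univ (μ := PM.μ σ),
    ← ae_iff_measure_eq (measurableSet_le measurable_const (hmeas i)).nullMeasurableSet]
  exact h_nonneg.mono fun p hp => sub_nonneg.mp hp

end Blackwell
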